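/- There exists a bijection between plane trees with n edges and 2-Motzkin paths of length n-1 that maps a tree with i old leaves and j young leaves to a path with i-1 up steps and j red horizontal steps. -/

import Mathlib

/-- A plane tree: a root together with an ordered (possibly empty) list of subtrees. -/
inductive PlaneTree where
  | node : List PlaneTree → PlaneTree

namespace PlaneTree

/-- The number of edges of a plane tree. -/
def edges : PlaneTree → ℕ
  | node ts => (ts.attach.map (fun t => edges t.1 + 1)).sum
decreasing_by have := List.sizeOf_lt_of_mem t.2; simp at *; omega

/-- Indicator that a tree is a single vertex (i.e. the corresponding child is a leaf). -/
def isLeafInd : PlaneTree → ℕ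
  | node [] => 1
  | node (_ :: _) => 0

/-- The number of old leaves: leaves that are the leftmost child of their parent. -/
def oldLeaves : PlaneTree → ℕ
  | node [] => 0
  | node (t :: ts) =>
      isLeafInd t + oldLeaves t + (ts.attach.map (fun s => oldLeaves s.1)).sum
decreasing_by
  · simp; omega
  · have := List.sizeOf_lt_of_mem s.2; simp at *; omega

/-- The number of young leaves: leaves that are not the leftmost child of their parent. -/
def youngLeaves : PlaneTree → ℕ
  | node [] => 0
  | node (t :: ts) =>
      youngLeaves t + (ts.attach.map (fun s => isLeafInd s.1 + youngLeaves s.1)).sum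
decreasing_by
  · simp; omega
  · have := List.sizeOf_lt_of_mem s.2; simp at *; omega

end PlaneTree

/-- Steps of a 2-Motzkin path: up, down, red horizontal, blue horizontal. -/
inductive Step2 where
  | up : Step2
  | down : Step2
  | red : Step2
  | blue : Step2
deriving DecidableEq

/-- The height change of a step. -/
def Step2.h : Step2 → ℤ
  | .up => 1
  | .down => -1
  | .red => 0
  | .blue => 0

/-- A list of steps is a 2-Motzkin path if it ends at height 0 and
no prefix goes below the x-axis. -/
def IsTwoMotzkin (p : List Step2) : Prop :=
  (p.map Step2.h).sum = 0 ∧ ∀ q : List Step2, q <+: p → 0 ≤ (q.map Step2.h).sum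

/-!
A plane tree whose root has children `c :: cs` is encoded by reading the younger children `cs`
from left to right, a leaf giving a red step `R` and any other subtree `s` giving `U (code s) D`,
and then appending `B (code c)` unless the eldest child `c` is a leaf. Young leaves thus become
red steps. Old leaves end the maximal chains of eldest children, and such a chain starts either
at the root or at a younger internal child, i.e. at an up step; hence there is one more old leaf
than up steps. Decoding reads off the first step, `R p`, `B p` or `U q D r`, where `D` is the first
return of the path to height `0`; this makes the decomposition, and so the inverse, unique.
-/

theorem List.prefix_append_iff {α : Type*} {r p q : List α} :
    r <+: p ++ q ↔ r <+: p ∨ ∃ r', r = p ++ r' ∧ r' <+: q := by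
  refine ⟨fun h => ?_, ?_⟩
  · rcases le_or_gt r.length p.length with hl | hl
    · exact .inl (List.prefix_of_prefix_length_le h (List.prefix_append p q) hl)
    · obtain ⟨r', rfl⟩ := List.prefix_of_prefix_length_le (List.prefix_append p q) h hl.le
      exact .inr ⟨r', rfl, (List.prefix_append_right_inj p).1 h⟩
  · rintro (h | ⟨r', rfl, h⟩)
    · exact h.trans (List.prefix_append p q)
    · exact (List.prefix_append_right_inj p).2 h

namespace IsTwoMotzkin

theorem nil : IsTwoMotzkin [] :=
  ⟨rfl, fun q hq => by simp [List.prefix_nil.1 hq]⟩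

theorem append {p q : List Step2} (hp : IsTwoMotzkin p) (hq : IsTwoMotzkin q) :
    IsTwoMotzkin (p ++ q) := by
  refine ⟨by simp [hp.1, hq.1], fun r hr => ?_⟩
  rcases List.prefix_append_iff.1 hr with h | ⟨r', rfl, hr'⟩
  · exact hp.2 r h
  · simpa [hp.1] using hq.2 r' hr'

end IsTwoMotzkin

theorem isTwoMotzkin_cons_iff_of_h_eq_zero {x : Step2} (hx : x.h = 0) {p : List Step2} :
    IsTwoMotzkin (x :: p) ↔ IsTwoMotzkin p := by
  refine and_congr (by simp [hx])
    ⟨fun h q hq => by simpa [hx] using h (x :: q) (by simpa using hq), fun h q hq => ?_⟩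
  rcases List.prefix_cons_iff.1 hq with rfl | ⟨t, rfl, ht⟩
  · simp
  · simpa [hx] using h t ht

theorem not_isTwoMotzkin_down_cons (p : List Step2) : ¬ IsTwoMotzkin (.down :: p) :=
  fun h => by simpa [Step2.h] using h.2 [.down] (by simp)

theorem exists_isTwoMotzkin_append_down_cons_of_prefix_neg {p : List Step2}
    (h : ∃ q, q <+: p ∧ (q.map Step2.h).sum < 0) :
    ∃ q r, p = q ++ .down :: r ∧ IsTwoMotzkin q := by
  induction p using List.reverseRecOn with
  | nil => simp at h
  | append_singleton p x ih =>
    by_cases hp : ∃ q, q <+: p ∧ (q.map Step2.h).sum < 0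
    · obtain ⟨q, r, rfl, hq⟩ := ih hp
      exact ⟨q, r ++ [x], by simp, hq⟩
    push Not at hp
    obtain ⟨q, hq, hneg⟩ := h
    rcases List.prefix_concat_iff.1 hq with rfl | hq
    · have hp₀ := hp p (List.prefix_refl p)
      simp only [List.map_append, List.map_cons, List.map_nil, List.sum_append, List.sum_cons,
        List.sum_nil] at hneg
      -- a step lowers the height by at most one, so it can only cross below zero as `D` from `0`
      have hx : x = .down := by
        cases x
        case down => rfl
        all_goals simp only [Step2.h] at hneg; omega
      subst hx
      refine ⟨p, [], rfl, ?_, hp⟩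
      simp only [Step2.h] at hneg
      omega
    · exact absurd hneg (not_lt.2 (hp q hq))

theorem isTwoMotzkin_up_cons_iff {p : List Step2} :
    IsTwoMotzkin (.up :: p) ↔ ∃ q r, p = q ++ .down :: r ∧ IsTwoMotzkin q ∧ IsTwoMotzkin r := by
  constructor
  · rintro ⟨hsum, hpre⟩
    simp only [List.map_cons, List.sum_cons, Step2.h] at hsum
    obtain ⟨q, r, rfl, hq⟩ :=
      exists_isTwoMotzkin_append_down_cons_of_prefix_neg ⟨p, List.prefix_refl p, by omega⟩
    refine ⟨q, r, rfl, hq, ?_, fun s hs => ?_⟩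
    · simp only [List.map_append, List.map_cons, List.sum_append, List.sum_cons, Step2.h,
        hq.1] at hsum
      omega
    · have := hpre (.up :: (q ++ .down :: s)) (by simpa using hs)
      simp only [List.map_cons, List.map_append, List.sum_cons, List.sum_append, Step2.h,
        hq.1] at this
      omega
  rintro ⟨q, r, rfl, hq, hr⟩
  refine ⟨by simp [Step2.h, hq.1, hr.1], fun s hs => ?_⟩
  rcases List.prefix_cons_iff.1 hs with rfl | ⟨t, rfl, ht⟩
  · simp
  rcases List.prefix_append_iff.1 ht with ht | ⟨t', rfl, ht'⟩
  · simpa [Step2.h] using Int.add_nonneg zero_le_one (hq.2 t ht)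
  rcases List.prefix_cons_iff.1 ht' with rfl | ⟨t'', rfl, ht''⟩
  · simp [Step2.h, hq.1]
  · simpa [Step2.h, hq.1] using hr.2 t'' ht''

theorem IsTwoMotzkin.append_down_cons_inj {q₁ q₂ r₁ r₂ : List Step2} (hq₁ : IsTwoMotzkin q₁)
    (hq₂ : IsTwoMotzkin q₂) (h : q₁ ++ .down :: r₁ = q₂ ++ .down :: r₂) : q₁ = q₂ ∧ r₁ = r₂ := by
  have key : ∀ {a b : List Step2}, IsTwoMotzkin a → IsTwoMotzkin b →
      a ++ [.down] <+: b ++ [.down] → a = b := by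
    intro a b ha hb hab
    rcases List.prefix_concat_iff.1 hab with hab | hab
    · simpa using hab
    · simpa [Step2.h, ha.1] using hb.2 _ hab
  have hq : q₁ = q₂ := by
    have h₁ : q₁ ++ [.down] <+: q₂ ++ .down :: r₂ := ⟨r₁, by simp [← h]⟩
    have h₂ : q₂ ++ [.down] <+: q₂ ++ .down :: r₂ := ⟨r₂, by simp⟩
    rcases List.prefix_or_prefix_of_prefix h₁ h₂ with h' | h'
    · exact key hq₁ hq₂ h'
    · exact (key hq₂ hq₁ h').symm
  subst hq
  exact ⟨rfl, by simpa using h⟩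

namespace PlaneTree

@[simp] theorem edges_nil : edges (node []) = 0 := by simp [edges]

@[simp] theorem edges_cons (t : PlaneTree) (ts : List PlaneTree) :
    edges (node (t :: ts)) = edges t + 1 + edges (node ts) := by
  simp [edges]

@[simp] theorem oldLeaves_nil : oldLeaves (node []) = 0 := by simp [oldLeaves]

@[simp] theorem oldLeaves_cons (t : PlaneTree) (ts : List PlaneTree) :
    oldLeaves (node (t :: ts)) = isLeafInd t + oldLeaves t + (ts.map oldLeaves).sum := by
  simp [oldLeaves]

@[simp] theorem youngLeaves_nil : youngLeaves (node []) = 0 := by simp [youngLeaves]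

@[simp] theorem youngLeaves_cons (t : PlaneTree) (ts : List PlaneTree) :
    youngLeaves (node (t :: ts)) =
      youngLeaves t + (ts.map fun s => isLeafInd s + youngLeaves s).sum := by
  simp [youngLeaves]

@[simp] theorem isLeafInd_nil : isLeafInd (node []) = 1 := rfl

@[simp] theorem isLeafInd_cons (t : PlaneTree) (ts : List PlaneTree) :
    isLeafInd (node (t :: ts)) = 0 := rfl

theorem isLeafInd_eq_zero_of_ne_nil {t : PlaneTree} (ht : t ≠ node []) : t.isLeafInd = 0 := by
  rcases t with ⟨_ | ⟨a, as⟩⟩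
  · exact absurd rfl ht
  · rfl

mutual
def toPath : PlaneTree → List Step2
  | node [] => []
  | node (node [] :: cs) => siblingsPath cs
  | node (node (a :: as) :: cs) => siblingsPath cs ++ .blue :: toPath (node (a :: as))
def siblingsPath : List PlaneTree → List Step2
  | [] => []
  | node [] :: ts => .red :: siblingsPath ts
  | node (a :: as) :: ts => .up :: (toPath (node (a :: as)) ++ .down :: siblingsPath ts)
end

mutual
theorem length_toPath : ∀ t : PlaneTree, (toPath t).length + 1 = t.edges + t.isLeafInd
  | node [] => by simp [toPath]
  | node (node [] :: cs) => by simp [toPath, length_siblingsPath cs]; omega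
  | node (node (a :: as) :: cs) => by
    have ih := length_toPath (node (a :: as))
    simp only [edges_cons, isLeafInd_cons, add_zero, toPath, List.length_append, List.length_cons,
      length_siblingsPath cs] at ih ⊢
    omega
theorem length_siblingsPath : ∀ ts : List PlaneTree, (siblingsPath ts).length = (node ts).edges
  | [] => by simp [siblingsPath]
  | node [] :: ts => by simp [siblingsPath, length_siblingsPath ts]; omega
  | node (a :: as) :: ts => by
    have ih := length_toPath (node (a :: as))
    simp only [edges_cons, isLeafInd_cons, add_zero, siblingsPath, List.length_cons,
      List.length_append, length_siblingsPath ts] at ih ⊢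
    omega
end

mutual
theorem count_up_toPath :
    ∀ t : PlaneTree, (toPath t).count .up + 1 = t.oldLeaves + t.isLeafInd
  | node [] => by simp [toPath]
  | node (node [] :: cs) => by simp [toPath, count_up_siblingsPath cs]; omega
  | node (node (a :: as) :: cs) => by
    have ih := count_up_toPath (node (a :: as))
    simp only [oldLeaves_cons, isLeafInd_cons, add_zero, zero_add, toPath, List.count_append,
      ne_eq, reduceCtorEq, not_false_eq_true, List.count_cons_of_ne,
      count_up_siblingsPath cs] at ih ⊢
    omega
theorem count_up_siblingsPath :
    ∀ ts : List PlaneTree, (siblingsPath ts).count .up = (ts.map oldLeaves).sum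
  | [] => by simp [siblingsPath]
  | node [] :: ts => by simp [siblingsPath, count_up_siblingsPath ts]
  | node (a :: as) :: ts => by
    have ih := count_up_toPath (node (a :: as))
    simp only [oldLeaves_cons, isLeafInd_cons, add_zero, siblingsPath, List.count_cons_self,
      List.count_append, ne_eq, reduceCtorEq, not_false_eq_true, List.count_cons_of_ne,
      count_up_siblingsPath ts, List.map_cons, List.sum_cons] at ih ⊢
    omega
end

mutual
theorem count_red_toPath : ∀ t : PlaneTree, (toPath t).count .red = t.youngLeaves
  | node [] => by simp [toPath]
  | node (node [] :: cs) => by simp [toPath, count_red_siblingsPath cs]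
  | node (node (a :: as) :: cs) => by
    simp [toPath, count_red_siblingsPath cs, count_red_toPath (node (a :: as)), add_comm]
theorem count_red_siblingsPath : ∀ ts : List PlaneTree,
    (siblingsPath ts).count .red = (ts.map fun s => s.isLeafInd + s.youngLeaves).sum
  | [] => by simp [siblingsPath]
  | node [] :: ts => by simp [siblingsPath, count_red_siblingsPath ts]; omega
  | node (a :: as) :: ts => by
    simp [siblingsPath, count_red_siblingsPath ts, count_red_toPath (node (a :: as))]
end

mutual
theorem isTwoMotzkin_toPath : ∀ t : PlaneTree, IsTwoMotzkin (toPath t)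
  | node [] => by simpa [toPath] using IsTwoMotzkin.nil
  | node (node [] :: cs) => by simpa [toPath] using isTwoMotzkin_siblingsPath cs
  | node (node (a :: as) :: cs) => by
    rw [toPath]
    exact (isTwoMotzkin_siblingsPath cs).append
      ((isTwoMotzkin_cons_iff_of_h_eq_zero (x := .blue) rfl).2
        (isTwoMotzkin_toPath (node (a :: as))))
theorem isTwoMotzkin_siblingsPath : ∀ ts : List PlaneTree, IsTwoMotzkin (siblingsPath ts)
  | [] => by simpa [siblingsPath] using IsTwoMotzkin.nil
  | node [] :: ts => by
    simpa [siblingsPath] using (isTwoMotzkin_cons_iff_of_h_eq_zero (x := .red) rfl).2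
      (isTwoMotzkin_siblingsPath ts)
  | node (a :: as) :: ts => by
    rw [siblingsPath]
    exact isTwoMotzkin_up_cons_iff.2
      ⟨_, _, rfl, isTwoMotzkin_toPath (node (a :: as)), isTwoMotzkin_siblingsPath ts⟩
end

def firstChildPath : PlaneTree → List Step2
  | node [] => []
  | node (a :: as) => .blue :: toPath (node (a :: as))

theorem toPath_node_cons (c : PlaneTree) (cs : List PlaneTree) :
    toPath (node (c :: cs)) = siblingsPath cs ++ firstChildPath c := by
  rcases c with ⟨_ | ⟨a, as⟩⟩ <;> simp [toPath, firstChildPath]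

theorem firstChildPath_of_ne_nil {t : PlaneTree} (ht : t ≠ node []) :
    firstChildPath t = .blue :: toPath t := by
  rcases t with ⟨_ | ⟨a, as⟩⟩
  · exact absurd rfl ht
  · rfl

theorem head_firstChildPath (t : PlaneTree) : ∀ x ∈ (firstChildPath t).head?, x = .blue := by
  rcases t with ⟨_ | ⟨a, as⟩⟩ <;> simp [firstChildPath]

theorem siblingsPath_cons_of_ne_nil {t : PlaneTree} (ht : t ≠ node []) (ts : List PlaneTree) :
    siblingsPath (t :: ts) = .up :: (toPath t ++ .down :: siblingsPath ts) := by
  rcases t with ⟨_ | ⟨a, as⟩⟩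
  · exact absurd rfl ht
  · rw [siblingsPath]

theorem exists_siblingsPath_cons_eq (t : PlaneTree) (ts : List PlaneTree) :
    ∃ x p, siblingsPath (t :: ts) = x :: p ∧ x ≠ .blue := by
  rcases t with ⟨_ | ⟨a, as⟩⟩ <;> simp [siblingsPath]

mutual
theorem eq_of_toPath_eq : ∀ {t t' : PlaneTree}, t ≠ node [] → t' ≠ node [] →
    toPath t = toPath t' → t = t'
  | node [], _, ht, _, _ => absurd rfl ht
  | _, node [], _, ht', _ => absurd rfl ht'
  | node (c :: cs), node (c' :: cs'), _, _, h => by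
    rw [toPath_node_cons, toPath_node_cons] at h
    obtain ⟨rfl, hc⟩ :=
      eq_of_siblingsPath_append_eq (head_firstChildPath c) (head_firstChildPath c') h
    rcases eq_or_ne c (node []) with rfl | hc₀ <;> rcases eq_or_ne c' (node []) with rfl | hc₀'
    · rfl
    · rw [firstChildPath_of_ne_nil hc₀'] at hc
      cases hc
    · rw [firstChildPath_of_ne_nil hc₀] at hc
      cases hc
    · simp only [firstChildPath_of_ne_nil hc₀, firstChildPath_of_ne_nil hc₀', List.cons.injEq,
        true_and] at hc
      rw [eq_of_toPath_eq hc₀ hc₀' hc]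
-- `r` stands for a `firstChildPath`, which can never be mistaken for the start of a sibling.
theorem eq_of_siblingsPath_append_eq : ∀ {ts ts' : List PlaneTree} {r r' : List Step2},
    (∀ x ∈ r.head?, x = .blue) → (∀ x ∈ r'.head?, x = .blue) →
    siblingsPath ts ++ r = siblingsPath ts' ++ r' → ts = ts' ∧ r = r'
  | [], [], _, _, _, _, h => ⟨rfl, by simpa [siblingsPath] using h⟩
  | [], t' :: ts', _, _, hr, _, h => by
    obtain ⟨x, p, hp, hx⟩ := exists_siblingsPath_cons_eq t' ts'
    simp only [siblingsPath, List.nil_append, hp, List.cons_append] at h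
    exact absurd (hr x (by simp [h])) hx
  | t :: ts, [], _, _, _, hr', h => by
    obtain ⟨x, p, hp, hx⟩ := exists_siblingsPath_cons_eq t ts
    simp only [siblingsPath, List.nil_append, hp, List.cons_append] at h
    exact absurd (hr' x (by simp [← h])) hx
  | t :: ts, t' :: ts', _, _, hr, hr', h => by
    rcases eq_or_ne t (node []) with rfl | ht <;> rcases eq_or_ne t' (node []) with rfl | ht'
    · simp only [siblingsPath, List.cons_append, List.cons.injEq, true_and] at h
      obtain ⟨rfl, rfl⟩ := eq_of_siblingsPath_append_eq hr hr' h
      exact ⟨rfl, rfl⟩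
    · simp [siblingsPath, siblingsPath_cons_of_ne_nil ht'] at h
    · simp [siblingsPath, siblingsPath_cons_of_ne_nil ht] at h
    · simp only [siblingsPath_cons_of_ne_nil ht, siblingsPath_cons_of_ne_nil ht',
        List.cons_append, List.append_assoc, List.cons.injEq, true_and] at h
      obtain ⟨hpath, hrest⟩ :=
        IsTwoMotzkin.append_down_cons_inj (isTwoMotzkin_toPath t) (isTwoMotzkin_toPath t') h
      obtain ⟨rfl, rfl⟩ := eq_of_siblingsPath_append_eq hr hr' hrest
      rw [eq_of_toPath_eq ht ht' hpath]
      exact ⟨rfl, rfl⟩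
end

theorem exists_toPath_node_cons_eq :
    ∀ p : List Step2, IsTwoMotzkin p → ∃ c cs, toPath (node (c :: cs)) = p
  | [], _ => ⟨node [], [], by simp [toPath, siblingsPath]⟩
  | .down :: p, hp => absurd hp (not_isTwoMotzkin_down_cons p)
  | .red :: p, hp => by
    obtain ⟨c, cs, h⟩ :=
      exists_toPath_node_cons_eq p ((isTwoMotzkin_cons_iff_of_h_eq_zero rfl).1 hp)
    refine ⟨c, node [] :: cs, ?_⟩
    rw [toPath_node_cons] at h ⊢
    simp [siblingsPath, h]
  | .blue :: p, hp => by
    obtain ⟨c, cs, h⟩ :=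
      exists_toPath_node_cons_eq p ((isTwoMotzkin_cons_iff_of_h_eq_zero rfl).1 hp)
    refine ⟨node (c :: cs), [], ?_⟩
    simp [toPath_node_cons (node (c :: cs)), siblingsPath, firstChildPath, h]
  | .up :: p, hp => by
    obtain ⟨q, r, rfl, hq, hr⟩ := isTwoMotzkin_up_cons_iff.1 hp
    obtain ⟨a, as, hqa⟩ := exists_toPath_node_cons_eq q hq
    obtain ⟨c, cs, hrc⟩ := exists_toPath_node_cons_eq r hr
    refine ⟨c, node (a :: as) :: cs, ?_⟩
    rw [toPath_node_cons] at hrc ⊢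
    simp [siblingsPath, hqa, ← hrc]
termination_by p => p.length

end PlaneTree

/-- There is a bijection between plane trees with `n` edges and 2-Motzkin paths of length
`n-1` mapping a tree with `i` old leaves and `j` young leaves to a path with `i-1` up steps
and `j` red horizontal steps. -/
theorem exists_bijection_trees_twoMotzkin (n : ℕ) (hn : 1 ≤ n) :
    ∃ f : {T : PlaneTree // T.edges = n} →
          {p : List Step2 // p.length = n - 1 ∧ IsTwoMotzkin p},
      Function.Bijective f ∧
      ∀ T : {T : PlaneTree // T.edges = n},
        (f T).1.count Step2.up + 1 = T.1.oldLeaves ∧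
        (f T).1.count Step2.red = T.1.youngLeaves := by
  have ne_nil (T : {T : PlaneTree // T.edges = n}) : T.1 ≠ .node [] := fun h => by
    have := T.2
    rw [h, PlaneTree.edges_nil] at this
    omega
  refine ⟨fun T => ⟨T.1.toPath, ?_, T.1.isTwoMotzkin_toPath⟩,
    ⟨fun T T' h => ?_, fun p => ?_⟩, fun T => ⟨?_, T.1.count_red_toPath⟩⟩
  · have := T.1.length_toPath
    rw [T.2, PlaneTree.isLeafInd_eq_zero_of_ne_nil (ne_nil T)] at this
    omega
  · exact Subtype.ext (PlaneTree.eq_of_toPath_eq (ne_nil T) (ne_nil T') (congrArg Subtype.val h))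
  · obtain ⟨c, cs, h⟩ := PlaneTree.exists_toPath_node_cons_eq p.1 p.2.2
    have hlen := PlaneTree.length_toPath (PlaneTree.node (c :: cs))
    refine ⟨⟨PlaneTree.node (c :: cs), ?_⟩, Subtype.ext h⟩
    rw [h, p.2.1, PlaneTree.isLeafInd_cons] at hlen
    omega
  · simpa [PlaneTree.isLeafInd_eq_zero_of_ne_nil (ne_nil T)] using T.1.count_up_toPath
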